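/- Let a, b > 0 and let J(u) = a·b·u^(a−1)·(1 − u^a)^(b−1) be the Kumaraswamy density on (0,1). Suppose the functions f₁(u) = J(u)/(u·log u) and u ↦ f₁(u)·log(−log u) both belong to L²(0,1). Define Ψ₁ = ∫₀¹∫₀¹ J(v)·J(w)·K(v,w)/(v·w·log v·log w) dv dw, Ψ₂ = ∫₀¹∫₀¹ J(v)·J(w)·K(v,w)·log(−log w)/(v·w·log v·log w) dv dw, and Ψ₃ = ∫₀¹∫₀¹ J(v)·J(w)·K(v,w)·log(−log v)·log(−log w)/(v·w·log v·log w) dv dw, where K(v,w) = min(v,w) − v·w. Then Ψ₁·Ψ₃ − Ψ₂² > 0. -/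

import Mathlib

open MeasureTheory Set

/-- The Kumaraswamy density with shape parameters `a, b`. -/
noncomputable def kumDensity (a b u : ℝ) : ℝ :=
  a * b * u ^ (a - 1) * (1 - u ^ a) ^ (b - 1)

/-- Auxiliary kernel factor. -/
noncomputable def hhAux (t v : ℝ) : ℝ := (if t < v then (1:ℝ) else 0) - v

lemma measurable_hhAux : Measurable (fun p : ℝ × ℝ => hhAux p.1 p.2) := by
  unfold hhAux
  exact (Measurable.ite (measurableSet_lt measurable_fst measurable_snd)
    measurable_const measurable_const).sub measurable_snd

lemma abs_hhAux_le {t v : ℝ} (h0 : 0 ≤ v) (h1 : v ≤ 1) : |hhAux t v| ≤ 1 := by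
  unfold hhAux
  rw [abs_le]
  split_ifs <;> constructor <;> linarith

lemma integral_ite_lt {v : ℝ} (h0 : 0 ≤ v) (h1 : v ≤ 1) :
    ∫ t in Ioo (0:ℝ) 1, (if t < v then (1:ℝ) else 0) = v := by
  have : (fun t : ℝ => if t < v then (1:ℝ) else 0) = (Iio v).indicator (fun _ => (1:ℝ)) := by
    funext t; simp [Set.indicator, Set.mem_Iio]
  rw [this, setIntegral_indicator measurableSet_Iio]
  have hs : Ioo (0:ℝ) 1 ∩ Iio v = Ioo 0 v := by
    ext x; simp only [mem_inter_iff, mem_Ioo, mem_Iio]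
    constructor
    · rintro ⟨⟨hx0, _⟩, hxv⟩; exact ⟨hx0, hxv⟩
    · rintro ⟨hx0, hxv⟩; exact ⟨⟨hx0, lt_of_lt_of_le hxv h1⟩, hxv⟩
  rw [hs]
  simp [Real.volume_Ioo, ENNReal.toReal_ofReal h0, h0]

lemma kernel_rep {v w : ℝ} (hv : v ∈ Ioo (0:ℝ) 1) (hw : w ∈ Ioo (0:ℝ) 1) :
    ∫ t in Ioo (0:ℝ) 1, hhAux t v * hhAux t w = min v w - v * w := by
  obtain ⟨hv0, hv1⟩ := hv
  obtain ⟨hw0, hw1⟩ := hw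
  have hptw : ∀ t : ℝ, hhAux t v * hhAux t w =
      ((if t < min v w then (1:ℝ) else 0) - w * (if t < v then (1:ℝ) else 0))
        - (v * (if t < w then (1:ℝ) else 0) - v * w) := by
    intro t
    unfold hhAux
    rcases lt_or_ge t v with h1 | h1 <;> rcases lt_or_ge t w with h2 | h2 <;>
      simp [h1, h2, lt_min_iff, not_lt.mpr, h1, h2] <;> ring
  have hint : ∀ u : ℝ, IntegrableOn (fun t => if t < u then (1:ℝ) else 0) (Ioo (0:ℝ) 1) := by
    intro u
    apply Integrable.mono' (integrable_const (1:ℝ))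
    · exact ((Measurable.ite (measurableSet_lt measurable_id measurable_const)
        measurable_const measurable_const)).aestronglyMeasurable
    · filter_upwards with t
      split_ifs <;> simp
  have h1 : IntegrableOn (fun t => (if t < min v w then (1:ℝ) else 0)
      - w * (if t < v then (1:ℝ) else 0)) (Ioo (0:ℝ) 1) :=
    (hint _).sub ((hint v).const_mul w)
  have h2 : IntegrableOn (fun t => v * (if t < w then (1:ℝ) else 0) - v * w)
      (Ioo (0:ℝ) 1) := ((hint w).const_mul v).sub (integrable_const _)
  calc ∫ t in Ioo (0:ℝ) 1, hhAux t v * hhAux t w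
      = ∫ t in Ioo (0:ℝ) 1, (((if t < min v w then (1:ℝ) else 0)
          - w * (if t < v then (1:ℝ) else 0))
          - (v * (if t < w then (1:ℝ) else 0) - v * w)) := by
        exact integral_congr_ae (Filter.Eventually.of_forall fun t => hptw t)
    _ = min v w - v * w := by
        rw [integral_sub h1 h2, integral_sub (hint _) ((hint v).const_mul w),
          integral_sub ((hint w).const_mul v) (integrable_const _),
          integral_const_mul, integral_const_mul,
          integral_ite_lt (le_of_lt hv0) (le_of_lt hv1),
          integral_ite_lt (le_of_lt hw0) (le_of_lt hw1),
          integral_ite_lt (le_of_lt (lt_min hv0 hw0)) (min_le_of_left_le (le_of_lt hv1))]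
        simp [Real.volume_Ioo]
        ring

lemma integrable_mul_hhAux {f : ℝ → ℝ}
    (hf : Integrable f (volume.restrict (Ioo (0:ℝ) 1))) (t : ℝ) :
    Integrable (fun v => f v * hhAux t v) (volume.restrict (Ioo (0:ℝ) 1)) := by
  apply Integrable.mono' hf.norm
  · exact hf.1.mul (measurable_hhAux.comp (measurable_const.prodMk measurable_id)).aestronglyMeasurable
  · filter_upwards [ae_restrict_mem measurableSet_Ioo] with v hv
    rw [norm_mul]
    calc ‖f v‖ * ‖hhAux t v‖ ≤ ‖f v‖ * 1 := by
          apply mul_le_mul_of_nonneg_left _ (norm_nonneg _)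
          exact abs_hhAux_le (le_of_lt hv.1) (le_of_lt hv.2)
      _ = ‖f v‖ := mul_one _

lemma fubini_key {p q : ℝ → ℝ}
    (hp : Integrable p (volume.restrict (Ioo (0:ℝ) 1)))
    (hq : Integrable q (volume.restrict (Ioo (0:ℝ) 1))) :
    ∫ v in Ioo (0:ℝ) 1, ∫ w in Ioo (0:ℝ) 1, p v * q w * (min v w - v * w)
      = ∫ t in Ioo (0:ℝ) 1,
          (∫ v in Ioo (0:ℝ) 1, p v * hhAux t v) * (∫ w in Ioo (0:ℝ) 1, q w * hhAux t w) := by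
  set s : Set ℝ := Ioo (0:ℝ) 1 with hs
  set μ : Measure ℝ := volume.restrict s with hμ
  have hms : MeasurableSet s := measurableSet_Ioo
  have hmem : ∀ᵐ z ∂(μ.prod μ), z.1 ∈ s ∧ z.2 ∈ s := by
    rw [hμ, Measure.prod_restrict]
    filter_upwards [ae_restrict_mem (hms.prod hms)] with z hz
    exact ⟨hz.1, hz.2⟩
  set Q : ℝ → ℝ := fun t => ∫ w, q w * hhAux t w ∂μ with hQ
  have hqm : AEStronglyMeasurable (fun z : ℝ × ℝ => q z.2 * hhAux z.1 z.2) (μ.prod μ) :=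
    (hq.1.comp_snd).mul measurable_hhAux.aestronglyMeasurable
  have hQm : AEStronglyMeasurable Q μ := hqm.integral_prod_right'
  set Cq : ℝ := ∫ w, ‖q w‖ ∂μ with hCq
  have hQb : ∀ t, ‖Q t‖ ≤ Cq := by
    intro t
    calc ‖Q t‖ ≤ ∫ w, ‖q w * hhAux t w‖ ∂μ := norm_integral_le_integral_norm _
      _ ≤ ∫ w, ‖q w‖ ∂μ := by
          apply integral_mono_ae (integrable_mul_hhAux hq t).norm hq.norm
          filter_upwards [ae_restrict_mem hms] with w hw
          rw [norm_mul]
          calc ‖q w‖ * ‖hhAux t w‖ ≤ ‖q w‖ * 1 :=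
                mul_le_mul_of_nonneg_left (abs_hhAux_le (le_of_lt hw.1) (le_of_lt hw.2))
                  (norm_nonneg _)
            _ = ‖q w‖ := mul_one _
  -- Step 1 : replace the kernel by its integral representation
  have step1 : (∫ v, (∫ w, p v * q w * (min v w - v * w) ∂μ) ∂μ)
      = ∫ v, (∫ w, p v * q w * (∫ t, hhAux t v * hhAux t w ∂μ) ∂μ) ∂μ := by
    apply setIntegral_congr_fun hms
    intro v hv
    apply setIntegral_congr_fun hms
    intro w hw
    dsimp only
    rw [kernel_rep hv hw]
  -- Step 2 : inner swap
  have step2 : ∀ v ∈ s, (∫ w, p v * q w * (∫ t, hhAux t v * hhAux t w ∂μ) ∂μ)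
      = p v * ∫ t, hhAux t v * Q t ∂μ := by
    intro v hv
    have h1 : (fun w => p v * q w * (∫ t, hhAux t v * hhAux t w ∂μ))
        = fun w => p v * ∫ t, q w * (hhAux t v * hhAux t w) ∂μ := by
      funext w
      rw [integral_const_mul]
      ring
    rw [h1, integral_const_mul]
    congr 1
    have hswap : (∫ w, (∫ t, q w * (hhAux t v * hhAux t w) ∂μ) ∂μ)
        = ∫ t, (∫ w, q w * (hhAux t v * hhAux t w) ∂μ) ∂μ := by
      apply integral_integral_swap
      apply Integrable.mono' (g := fun z : ℝ × ℝ => ‖q z.1‖ * 1)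
          (by simpa using hq.norm.mul_prod (integrable_const (1:ℝ)))
      · exact (hq.1.comp_fst).mul
          (((measurable_hhAux.comp (measurable_snd.prodMk measurable_const)).mul
            (measurable_hhAux.comp (measurable_snd.prodMk measurable_fst))).aestronglyMeasurable)
      · filter_upwards [hmem] with z hz
        show ‖q z.1 * (hhAux z.2 v * hhAux z.2 z.1)‖ ≤ ‖q z.1‖ * 1
        rw [norm_mul, norm_mul, mul_one]
        calc ‖q z.1‖ * (‖hhAux z.2 v‖ * ‖hhAux z.2 z.1‖) ≤ ‖q z.1‖ * (1 * 1) := by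
              apply mul_le_mul_of_nonneg_left _ (norm_nonneg _)
              exact mul_le_mul (abs_hhAux_le (le_of_lt hv.1) (le_of_lt hv.2))
                (abs_hhAux_le (le_of_lt hz.1.1) (le_of_lt hz.1.2)) (norm_nonneg _) zero_le_one
          _ = ‖q z.1‖ := by ring
    rw [hswap]
    congr 1
    funext t
    rw [hQ, ← integral_const_mul]
    congr 1
    funext w
    ring
  -- Step 3 : outer swap
  have step3 : (∫ v, p v * (∫ t, hhAux t v * Q t ∂μ) ∂μ)
      = ∫ t, (∫ v, p v * hhAux t v ∂μ) * Q t ∂μ := by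
    have h1 : (fun v => p v * (∫ t, hhAux t v * Q t ∂μ))
        = fun v => ∫ t, p v * (hhAux t v * Q t) ∂μ := by
      funext v
      rw [integral_const_mul]
    rw [h1]
    have hswap : (∫ v, (∫ t, p v * (hhAux t v * Q t) ∂μ) ∂μ)
        = ∫ t, (∫ v, p v * (hhAux t v * Q t) ∂μ) ∂μ := by
      apply integral_integral_swap
      apply Integrable.mono' (g := fun z : ℝ × ℝ => ‖p z.1‖ * Cq)
          (hp.norm.mul_prod (integrable_const Cq))
      · exact (hp.1.comp_fst).mul
          (((measurable_hhAux.comp (measurable_snd.prodMk measurable_fst)).aestronglyMeasurable).mul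
            hQm.comp_snd)
      · filter_upwards [hmem] with z hz
        show ‖p z.1 * (hhAux z.2 z.1 * Q z.2)‖ ≤ ‖p z.1‖ * Cq
        rw [norm_mul, norm_mul]
        apply mul_le_mul_of_nonneg_left _ (norm_nonneg _)
        calc ‖hhAux z.2 z.1‖ * ‖Q z.2‖ ≤ 1 * Cq :=
              mul_le_mul (abs_hhAux_le (le_of_lt hz.1.1) (le_of_lt hz.1.2)) (hQb _)
                (norm_nonneg _) zero_le_one
          _ = Cq := one_mul _
    rw [hswap]
    congr 1
    funext t
    rw [← integral_mul_const]
    congr 1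
    funext v
    ring
  rw [step1, setIntegral_congr_fun hms step2, step3]

lemma gram_pos {μ : Measure ℝ} {F G : ℝ → ℝ}
    (hF2 : Integrable (fun t => F t * F t) μ)
    (hFG : Integrable (fun t => F t * G t) μ)
    (hG2 : Integrable (fun t => G t * G t) μ)
    (hind : ∀ c d : ℝ, ((fun t => c * F t + d * G t) =ᵐ[μ] 0) → c = 0 ∧ d = 0) :
    0 < (∫ t, F t * F t ∂μ) * (∫ t, G t * G t ∂μ) - (∫ t, F t * G t ∂μ) ^ 2 := by
  set A := ∫ t, F t * F t ∂μ with hA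
  set B := ∫ t, F t * G t ∂μ with hB
  set C := ∫ t, G t * G t ∂μ with hC
  have hA0 : 0 ≤ A := integral_nonneg fun t => mul_self_nonneg _
  have hApos : 0 < A := by
    rcases hA0.lt_or_eq with h | h
    · exact h
    · exfalso
      have hzero : (fun t => F t * F t) =ᵐ[μ] 0 :=
        (integral_eq_zero_iff_of_nonneg_ae
          (Filter.Eventually.of_forall fun t => mul_self_nonneg _) hF2).mp h.symm
      have hFzero : (fun t => (1:ℝ) * F t + 0 * G t) =ᵐ[μ] 0 := by
        filter_upwards [hzero] with t ht
        simp only [Pi.zero_apply] at ht ⊢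
        have := mul_self_eq_zero.mp ht
        simp [this]
      exact one_ne_zero (hind 1 0 hFzero).1
  set l := B / A with hl
  have hDint : Integrable (fun t => (G t - l * F t) * (G t - l * F t)) μ := by
    have : (fun t => (G t - l * F t) * (G t - l * F t))
        = fun t => (G t * G t - (2 * l) * (F t * G t)) + (l * l) * (F t * F t) := by
      funext t; ring
    rw [this]
    exact (hG2.sub (hFG.const_mul _)).add (hF2.const_mul _)
  have hDval : (∫ t, (G t - l * F t) * (G t - l * F t) ∂μ) = C - 2 * l * B + l * l * A := by
    have h1 : (fun t => (G t - l * F t) * (G t - l * F t))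
        = fun t => (G t * G t - (2 * l) * (F t * G t)) + (l * l) * (F t * F t) := by
      funext t; ring
    have h2 : Integrable (fun t => G t * G t - (2 * l) * (F t * G t)) μ :=
      hG2.sub (hFG.const_mul _)
    have h3 : Integrable (fun t => (l * l) * (F t * F t)) μ := hF2.const_mul _
    have h4 : Integrable (fun t => (2 * l) * (F t * G t)) μ := hFG.const_mul _
    rw [h1, integral_add h2 h3, integral_sub hG2 h4, integral_const_mul, integral_const_mul]
  have hD0 : 0 ≤ ∫ t, (G t - l * F t) * (G t - l * F t) ∂μ :=
    integral_nonneg fun t => mul_self_nonneg _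
  have hDpos : 0 < ∫ t, (G t - l * F t) * (G t - l * F t) ∂μ := by
    rcases hD0.lt_or_eq with h | h
    · exact h
    · exfalso
      have hzero : (fun t => (G t - l * F t) * (G t - l * F t)) =ᵐ[μ] 0 :=
        (integral_eq_zero_iff_of_nonneg_ae
          (Filter.Eventually.of_forall fun t => mul_self_nonneg _) hDint).mp h.symm
      have hGzero : (fun t => (-l) * F t + 1 * G t) =ᵐ[μ] 0 := by
        filter_upwards [hzero] with t ht
        simp only [Pi.zero_apply] at ht ⊢
        have := mul_self_eq_zero.mp ht
        linarith
      exact one_ne_zero (hind (-l) 1 hGzero).2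
  have key : A * C - B ^ 2 = A * (C - 2 * l * B + l * l * A) := by
    rw [hl]; field_simp; ring
  rw [key]
  rw [hDval] at hDpos
  positivity

lemma no_zero_integral_pos {g : ℝ → ℝ} {x y : ℝ} (hxy : x < y)
    (hint : IntegrableOn g (Ioo x y))
    (hsign : ∀ u ∈ Ioo x y, 0 < g u)
    (h0 : ∫ u in Ioo x y, g u = 0) : False := by
  have hae : g =ᵐ[volume.restrict (Ioo x y)] 0 := by
    refine (setIntegral_eq_zero_iff_of_nonneg_ae ?_ hint).mp h0
    filter_upwards [ae_restrict_mem measurableSet_Ioo] with u hu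
    exact le_of_lt (hsign u hu)
  have : ∀ᵐ u ∂(volume.restrict (Ioo x y)), False := by
    filter_upwards [hae, ae_restrict_mem measurableSet_Ioo] with u hu hmem
    exact absurd hu (ne_of_gt (hsign u hmem))
  have hbot : volume.restrict (Ioo x y) univ = 0 := by
    have h' := ae_iff.mp this
    simpa using h'
  rw [Measure.restrict_apply_univ, Real.volume_Ioo] at hbot
  rw [ENNReal.ofReal_eq_zero] at hbot
  linarith

lemma no_zero_integral {g : ℝ → ℝ} {x y : ℝ} (hxy : x < y)
    (hint : IntegrableOn g (Ioo x y))
    (hsign : (∀ u ∈ Ioo x y, 0 < g u) ∨ (∀ u ∈ Ioo x y, g u < 0))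
    (h0 : ∫ u in Ioo x y, g u = 0) : False := by
  rcases hsign with h | h
  · exact no_zero_integral_pos hxy hint h h0
  · refine no_zero_integral_pos (g := fun u => -g u) hxy hint.neg
      (fun u hu => by simpa using h u hu) ?_
    rw [integral_neg, h0, neg_zero]

lemma sign_interval {φ : ℝ → ℝ} {u₀ : ℝ} (hu : u₀ ∈ Ioo (0:ℝ) 1)
    (hcont : ContinuousAt φ u₀) (hpos : 0 < φ u₀) :
    ∃ x y, x < y ∧ Ioo x y ⊆ Ioo 0 1 ∧ ∀ u ∈ Ioo x y, 0 < φ u := by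
  have h1 : φ ⁻¹' (Ioi 0) ∈ nhds u₀ := hcont.preimage_mem_nhds (Ioi_mem_nhds hpos)
  have h2 : Ioo (0:ℝ) 1 ∈ nhds u₀ := isOpen_Ioo.mem_nhds hu
  obtain ⟨x, y, hxy, hsub⟩ := mem_nhds_iff_exists_Ioo_subset.mp (Filter.inter_mem h2 h1)
  exact ⟨x, y, hxy.1.trans hxy.2, fun u hu' => (hsub hu').1,
    fun u hu' => (hsub hu').2⟩

lemma log_neglog_continuousAt {u₀ : ℝ} (hu : u₀ ∈ Ioo (0:ℝ) 1) :
    ContinuousAt (fun u => Real.log (-Real.log u)) u₀ := by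
  have hlog : Real.log u₀ < 0 := Real.log_neg hu.1 hu.2
  have h1 : ContinuousAt (fun u => -Real.log u) u₀ :=
    (Real.continuousAt_log (ne_of_gt hu.1)).neg
  exact (Real.continuousAt_log (by linarith)).comp h1

lemma indep_aux {f : ℝ → ℝ} (hneg : ∀ u ∈ Ioo (0:ℝ) 1, f u < 0)
    (hi₁ : Integrable f (volume.restrict (Ioo (0:ℝ) 1)))
    (hi₂ : Integrable (fun u => f u * Real.log (-Real.log u))
      (volume.restrict (Ioo (0:ℝ) 1)))
    (c d : ℝ)
    (hdep : (fun t => c * (∫ v in Ioo (0:ℝ) 1, f v * hhAux t v)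
        + d * (∫ v in Ioo (0:ℝ) 1, (f v * Real.log (-Real.log v)) * hhAux t v))
      =ᵐ[volume.restrict (Ioo (0:ℝ) 1)] 0) : c = 0 ∧ d = 0 := by
  by_contra hcd
  set s : Set ℝ := Ioo (0:ℝ) 1 with hs
  set μ : Measure ℝ := volume.restrict s with hμ
  have hms : MeasurableSet s := measurableSet_Ioo
  set g : ℝ → ℝ := fun v => c * f v + d * (f v * Real.log (-Real.log v)) with hg
  have hig : Integrable g μ := (hi₁.const_mul c).add (hi₂.const_mul d)
  set κ : ℝ := ∫ v, g v * v ∂μ with hκ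
  set G : ℝ → ℝ := fun r => ∫ v in Ioo r 1, g v with hG
  -- Claim A
  have claimA : ∀ t ∈ s, c * (∫ v, f v * hhAux t v ∂μ)
      + d * (∫ v, (f v * Real.log (-Real.log v)) * hhAux t v ∂μ) = G t - κ := by
    intro t ht
    have e1 : c * (∫ v, f v * hhAux t v ∂μ)
        + d * (∫ v, (f v * Real.log (-Real.log v)) * hhAux t v ∂μ)
        = ∫ v, g v * hhAux t v ∂μ := by
      rw [← integral_const_mul c, ← integral_const_mul d,
        ← integral_add ((integrable_mul_hhAux hi₁ t).const_mul c)
          ((integrable_mul_hhAux hi₂ t).const_mul d)]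
      congr 1
      funext v
      rw [hg]
      ring
    have hgind : Integrable (fun v => g v * (if t < v then (1:ℝ) else 0)) μ := by
      apply Integrable.mono' hig.norm
      · exact hig.1.mul ((Measurable.ite measurableSet_Ioi
          measurable_const measurable_const).aestronglyMeasurable)
      · filter_upwards with v
        rw [norm_mul]
        split_ifs <;> simp
    have hgv : Integrable (fun v => g v * v) μ := by
      apply Integrable.mono' hig.norm
      · exact hig.1.mul measurable_id.aestronglyMeasurable
      · filter_upwards [ae_restrict_mem hms] with v hv
        rw [norm_mul]
        calc ‖g v‖ * ‖v‖ ≤ ‖g v‖ * 1 := by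
              apply mul_le_mul_of_nonneg_left _ (norm_nonneg _)
              rw [Real.norm_eq_abs, abs_le]
              constructor <;> [linarith [hv.1]; linarith [hv.2]]
          _ = ‖g v‖ := mul_one _
    have e2 : (∫ v, g v * hhAux t v ∂μ)
        = (∫ v, g v * (if t < v then (1:ℝ) else 0) ∂μ) - ∫ v, g v * v ∂μ := by
      rw [← integral_sub hgind hgv]
      congr 1
      funext v
      unfold hhAux
      ring
    have e3 : (∫ v, g v * (if t < v then (1:ℝ) else 0) ∂μ) = G t := by
      have hind : (fun v => g v * (if t < v then (1:ℝ) else 0)) = (Ioi t).indicator g := by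
        funext v
        simp only [indicator, mem_Ioi]
        split_ifs <;> ring
      have hseteq : Ioo (0:ℝ) 1 ∩ Ioi t = Ioo t 1 := by
        ext v
        simp only [mem_inter_iff, mem_Ioo, mem_Ioi]
        constructor
        · rintro ⟨⟨_, h1⟩, h2⟩; exact ⟨h2, h1⟩
        · rintro ⟨h1, h2⟩; exact ⟨⟨lt_of_le_of_lt (le_of_lt ht.1) h1, h2⟩, h1⟩
      rw [hind, hμ, hs, setIntegral_indicator measurableSet_Ioi, hseteq]
    rw [e1, e2, e3, ← hκ]
  -- a.e. constancy of G
  have hae : ∀ᵐ t ∂μ, G t = κ := by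
    filter_upwards [hdep, ae_restrict_mem hms] with t h1 h2
    have h3 := claimA t h2
    simp only [Pi.zero_apply] at h1
    rw [h1] at h3
    linarith
  -- sign interval
  set φ : ℝ → ℝ := fun u => c + d * Real.log (-Real.log u) with hφ
  have hgφ : ∀ u, g u = f u * φ u := by intro u; rw [hg, hφ]; ring
  have hexists : ∃ u₀ ∈ Ioo (0:ℝ) 1, φ u₀ ≠ 0 := by
    by_cases hd : d = 0
    · have hc : c ≠ 0 := fun h => hcd ⟨h, hd⟩
      exact ⟨1/2, by norm_num, by simp [hφ, hd, hc]⟩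
    · refine ⟨Real.exp (-Real.exp ((1 - c)/d)), ⟨Real.exp_pos _, ?_⟩, ?_⟩
      · rw [Real.exp_lt_one_iff]
        exact neg_neg_of_pos (Real.exp_pos _)
      · simp only [hφ, Real.log_exp, neg_neg]
        field_simp
        intro h; linarith
  obtain ⟨u₀, hu₀, hφne⟩ := hexists
  have hcont : ContinuousAt φ u₀ :=
    continuousAt_const.add (continuousAt_const.mul (log_neglog_continuousAt hu₀))
  have hsgn : ∃ x y, x < y ∧ Ioo x y ⊆ Ioo (0:ℝ) 1 ∧
      ((∀ u ∈ Ioo x y, 0 < g u) ∨ (∀ u ∈ Ioo x y, g u < 0)) := by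
    rcases lt_or_gt_of_ne hφne with hlt | hgt
    · obtain ⟨x, y, hxy, hsub, hpos⟩ := sign_interval hu₀ hcont.neg (by linarith : 0 < -φ u₀)
      refine ⟨x, y, hxy, hsub, Or.inl fun u hu => ?_⟩
      rw [hgφ]
      have h1 : f u < 0 := hneg u (hsub hu)
      have h2 : φ u < 0 := by have := hpos u hu; simp only [Pi.neg_apply] at this; linarith
      exact mul_pos_of_neg_of_neg h1 h2
    · obtain ⟨x, y, hxy, hsub, hpos⟩ := sign_interval hu₀ hcont hgt
      refine ⟨x, y, hxy, hsub, Or.inr fun u hu => ?_⟩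
      rw [hgφ]
      exact mul_neg_of_neg_of_pos (hneg u (hsub hu)) (hpos u hu)
  obtain ⟨x, y, hxy, hsub, hsgn⟩ := hsgn
  -- two points of constancy inside (x, y)
  have hae' : ∀ᵐ t ∂(volume.restrict (Ioo x y)), G t = κ :=
    (Filter.Eventually.filter_mono (ae_mono (Measure.restrict_mono hsub le_rfl))) hae
  have hnull : volume ({t | ¬ (G t = κ)} ∩ Ioo x y) = 0 := by
    have h' := ae_iff.mp hae'
    rwa [Measure.restrict_apply' measurableSet_Ioo] at h'
  set T : Set ℝ := Ioo x y ∩ {t | G t = κ} with hT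
  have hTnontriv : ¬ T.Subsingleton := by
    intro hss
    have hTz : volume T = 0 := hss.measure_zero _
    have hcover : Ioo x y ⊆ T ∪ ({t | ¬ (G t = κ)} ∩ Ioo x y) := by
      intro t ht
      by_cases hGt : G t = κ
      · exact Or.inl ⟨ht, hGt⟩
      · exact Or.inr ⟨hGt, ht⟩
    have hle := (measure_mono (μ := (volume : Measure ℝ)) hcover).trans (measure_union_le _ _)
    rw [hTz, hnull] at hle
    simp only [add_zero, nonpos_iff_eq_zero] at hle
    rw [Real.volume_Ioo, ENNReal.ofReal_eq_zero] at hle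
    linarith
  rw [Set.not_subsingleton_iff] at hTnontriv
  obtain ⟨t₁, ht₁, t₂, ht₂, hne⟩ := hTnontriv
  -- wlog t₁ < t₂
  have key : ∀ r₁ r₂, r₁ ∈ T → r₂ ∈ T → r₁ < r₂ → False := by
    intro r₁ r₂ hr₁ hr₂ hlt
    have hr₁s : r₁ ∈ Ioo (0:ℝ) 1 := hsub hr₁.1
    have hr₂s : r₂ ∈ Ioo (0:ℝ) 1 := hsub hr₂.1
    have II1 : IntervalIntegrable g volume r₁ r₂ := by
      rw [intervalIntegrable_iff_integrableOn_Ioc_of_le (le_of_lt hlt)]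
      rw [integrableOn_Ioc_iff_integrableOn_Ioo]
      exact IntegrableOn.mono_set hig (fun v hv => ⟨lt_trans hr₁s.1 hv.1, lt_trans hv.2 hr₂s.2⟩)
    have II2 : IntervalIntegrable g volume r₂ 1 := by
      rw [intervalIntegrable_iff_integrableOn_Ioc_of_le (le_of_lt hr₂s.2)]
      rw [integrableOn_Ioc_iff_integrableOn_Ioo]
      exact IntegrableOn.mono_set hig (fun v hv => ⟨lt_trans hr₂s.1 hv.1, hv.2⟩)
    have hGr : ∀ r, r ∈ Ioo (0:ℝ) 1 → (∫ u in r..(1:ℝ), g u) = G r := by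
      intro r hr
      rw [intervalIntegral.integral_of_le (le_of_lt hr.2), integral_Ioc_eq_integral_Ioo]
    have hadd := intervalIntegral.integral_add_adjacent_intervals II1 II2
    rw [hGr r₂ hr₂s, hGr r₁ hr₁s, hr₁.2, hr₂.2] at hadd
    have hzero : (∫ u in r₁..r₂, g u) = 0 := by linarith
    rw [intervalIntegral.integral_of_le (le_of_lt hlt), integral_Ioc_eq_integral_Ioo] at hzero
    apply no_zero_integral hlt
        (IntegrableOn.mono_set hig (fun v hv => ⟨lt_trans hr₁s.1 hv.1, lt_trans hv.2 hr₂s.2⟩)) _ hzero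
    rcases hsgn with h | h
    · exact Or.inl fun u hu => h u ⟨lt_trans hr₁.1.1 hu.1, lt_trans hu.2 hr₂.1.2⟩
    · exact Or.inr fun u hu => h u ⟨lt_trans hr₁.1.1 hu.1, lt_trans hu.2 hr₂.1.2⟩
  rcases lt_or_gt_of_ne hne with h | h
  · exact key t₁ t₂ ht₁ ht₂ h
  · exact key t₂ t₁ ht₂ ht₁ h

lemma FF_aesm {f : ℝ → ℝ} (hf : Integrable f (volume.restrict (Ioo (0:ℝ) 1))) :
    AEStronglyMeasurable (fun t => ∫ v in Ioo (0:ℝ) 1, f v * hhAux t v)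
      (volume.restrict (Ioo (0:ℝ) 1)) :=
  ((hf.1.comp_snd).mul measurable_hhAux.aestronglyMeasurable).integral_prod_right'

lemma FF_bound {f : ℝ → ℝ} (hf : Integrable f (volume.restrict (Ioo (0:ℝ) 1))) (t : ℝ) :
    ‖∫ v in Ioo (0:ℝ) 1, f v * hhAux t v‖ ≤ ∫ v in Ioo (0:ℝ) 1, ‖f v‖ :=
  calc ‖∫ v in Ioo (0:ℝ) 1, f v * hhAux t v‖
      ≤ ∫ v in Ioo (0:ℝ) 1, ‖f v * hhAux t v‖ := norm_integral_le_integral_norm _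
    _ ≤ ∫ v in Ioo (0:ℝ) 1, ‖f v‖ := by
        apply integral_mono_ae (integrable_mul_hhAux hf t).norm hf.norm
        filter_upwards [ae_restrict_mem measurableSet_Ioo] with v hv
        rw [norm_mul]
        calc ‖f v‖ * ‖hhAux t v‖ ≤ ‖f v‖ * 1 :=
              mul_le_mul_of_nonneg_left (abs_hhAux_le (le_of_lt hv.1) (le_of_lt hv.2))
                (norm_nonneg _)
          _ = ‖f v‖ := mul_one _

lemma FF_mul_integrable {f q : ℝ → ℝ}
    (hf : Integrable f (volume.restrict (Ioo (0:ℝ) 1)))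
    (hq : Integrable q (volume.restrict (Ioo (0:ℝ) 1))) :
    Integrable (fun t => (∫ v in Ioo (0:ℝ) 1, f v * hhAux t v)
      * (∫ w in Ioo (0:ℝ) 1, q w * hhAux t w)) (volume.restrict (Ioo (0:ℝ) 1)) := by
  haveI : Fact ((volume : Measure ℝ) (Ioo (0:ℝ) 1) < ⊤) :=
    ⟨by rw [Real.volume_Ioo]; exact ENNReal.ofReal_lt_top⟩
  apply Integrable.mono'
      (integrable_const ((∫ v in Ioo (0:ℝ) 1, ‖f v‖) * (∫ v in Ioo (0:ℝ) 1, ‖q v‖)))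
      ((FF_aesm hf).mul (FF_aesm hq))
  filter_upwards with t
  simp only [Pi.mul_apply, norm_mul]
  exact mul_le_mul (FF_bound hf t) (FF_bound hq t) (norm_nonneg _)
    (integral_nonneg fun v => norm_nonneg _)

lemma f1_neg {a b : ℝ} (ha : 0 < a) (hb : 0 < b) {u : ℝ} (hu : u ∈ Ioo (0:ℝ) 1) :
    kumDensity a b u / (u * Real.log u) < 0 := by
  have hJ : 0 < kumDensity a b u := by
    unfold kumDensity
    have h1 : (0:ℝ) < u ^ (a - 1) := Real.rpow_pos_of_pos hu.1 _
    have h2 : u ^ a < 1 := Real.rpow_lt_one (le_of_lt hu.1) hu.2 ha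
    have h3 : (0:ℝ) < (1 - u ^ a) ^ (b - 1) := Real.rpow_pos_of_pos (by linarith) _
    exact mul_pos (mul_pos (mul_pos ha hb) h1) h3
  exact div_neg_of_pos_of_neg hJ (mul_neg_of_pos_of_neg hu.1 (Real.log_neg hu.1 hu.2))

/-- For the Fréchet severity model with Kumaraswamy density `J` (parameters
`a, b > 0`), assuming `f₁(u) = J(u)/(u log u)` and `f₁ · log(-log ·)` are in
`L²(0,1)`, the determinant-type quantity `Ψ₁Ψ₃ - Ψ₂²` formed with the
Brownian-bridge kernel `K v w = min v w - v w` is strictly positive. -/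
theorem frechet_psi_det_pos
    (a b : ℝ) (ha : 0 < a) (hb : 0 < b)
    (hL₁ : MemLp (fun u => kumDensity a b u / (u * Real.log u)) 2
      (volume.restrict (Ioo (0:ℝ) 1)))
    (hL₂ : MemLp (fun u => kumDensity a b u / (u * Real.log u) *
      Real.log (-Real.log u)) 2 (volume.restrict (Ioo (0:ℝ) 1))) :
    0 < (∫ v in Ioo (0:ℝ) 1, ∫ w in Ioo (0:ℝ) 1,
          kumDensity a b v * kumDensity a b w * (min v w - v * w) /
            (v * w * Real.log v * Real.log w)) *
        (∫ v in Ioo (0:ℝ) 1, ∫ w in Ioo (0:ℝ) 1,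
          kumDensity a b v * kumDensity a b w * (min v w - v * w) *
            Real.log (-Real.log v) * Real.log (-Real.log w) /
            (v * w * Real.log v * Real.log w)) -
        (∫ v in Ioo (0:ℝ) 1, ∫ w in Ioo (0:ℝ) 1,
          kumDensity a b v * kumDensity a b w * (min v w - v * w) *
            Real.log (-Real.log w) /
            (v * w * Real.log v * Real.log w)) ^ 2 := by
  haveI : Fact ((volume : Measure ℝ) (Ioo (0:ℝ) 1) < ⊤) :=
    ⟨by rw [Real.volume_Ioo]; exact ENNReal.ofReal_lt_top⟩
  have hi₁ : Integrable (fun u => kumDensity a b u / (u * Real.log u))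
      (volume.restrict (Ioo (0:ℝ) 1)) := hL₁.integrable one_le_two
  have hi₂ : Integrable (fun u => kumDensity a b u / (u * Real.log u) *
      Real.log (-Real.log u)) (volume.restrict (Ioo (0:ℝ) 1)) := hL₂.integrable one_le_two
  have r1 : ∀ v w : ℝ, kumDensity a b v * kumDensity a b w * (min v w - v * w) /
      (v * w * Real.log v * Real.log w)
      = (kumDensity a b v / (v * Real.log v)) * (kumDensity a b w / (w * Real.log w))
        * (min v w - v * w) := by
    intro v w; simp only [div_eq_mul_inv, mul_inv]; ring
  have r2 : ∀ v w : ℝ, kumDensity a b v * kumDensity a b w * (min v w - v * w) *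
      Real.log (-Real.log w) / (v * w * Real.log v * Real.log w)
      = (kumDensity a b v / (v * Real.log v))
        * (kumDensity a b w / (w * Real.log w) * Real.log (-Real.log w))
        * (min v w - v * w) := by
    intro v w; simp only [div_eq_mul_inv, mul_inv]; ring
  have r3 : ∀ v w : ℝ, kumDensity a b v * kumDensity a b w * (min v w - v * w) *
      Real.log (-Real.log v) * Real.log (-Real.log w) /
      (v * w * Real.log v * Real.log w)
      = (kumDensity a b v / (v * Real.log v) * Real.log (-Real.log v))
        * (kumDensity a b w / (w * Real.log w) * Real.log (-Real.log w))
        * (min v w - v * w) := by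
    intro v w; simp only [div_eq_mul_inv, mul_inv]; ring
  have e1 : (∫ v in Ioo (0:ℝ) 1, ∫ w in Ioo (0:ℝ) 1,
        kumDensity a b v * kumDensity a b w * (min v w - v * w) /
          (v * w * Real.log v * Real.log w))
      = ∫ t in Ioo (0:ℝ) 1,
          (∫ v in Ioo (0:ℝ) 1, (kumDensity a b v / (v * Real.log v)) * hhAux t v)
          * (∫ w in Ioo (0:ℝ) 1, (kumDensity a b w / (w * Real.log w)) * hhAux t w) := by
    rw [← fubini_key hi₁ hi₁]
    simp only [r1]
  have e2 : (∫ v in Ioo (0:ℝ) 1, ∫ w in Ioo (0:ℝ) 1,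
        kumDensity a b v * kumDensity a b w * (min v w - v * w) *
          Real.log (-Real.log w) / (v * w * Real.log v * Real.log w))
      = ∫ t in Ioo (0:ℝ) 1,
          (∫ v in Ioo (0:ℝ) 1, (kumDensity a b v / (v * Real.log v)) * hhAux t v)
          * (∫ w in Ioo (0:ℝ) 1,
              (kumDensity a b w / (w * Real.log w) * Real.log (-Real.log w)) * hhAux t w) := by
    rw [← fubini_key hi₁ hi₂]
    simp only [r2]
  have e3 : (∫ v in Ioo (0:ℝ) 1, ∫ w in Ioo (0:ℝ) 1,
        kumDensity a b v * kumDensity a b w * (min v w - v * w) *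
          Real.log (-Real.log v) * Real.log (-Real.log w) /
          (v * w * Real.log v * Real.log w))
      = ∫ t in Ioo (0:ℝ) 1,
          (∫ v in Ioo (0:ℝ) 1,
              (kumDensity a b v / (v * Real.log v) * Real.log (-Real.log v)) * hhAux t v)
          * (∫ w in Ioo (0:ℝ) 1,
              (kumDensity a b w / (w * Real.log w) * Real.log (-Real.log w)) * hhAux t w) := by
    rw [← fubini_key hi₂ hi₂]
    simp only [r3]
  rw [e1, e2, e3]
  exact gram_pos (FF_mul_integrable hi₁ hi₁) (FF_mul_integrable hi₁ hi₂)
    (FF_mul_integrable hi₂ hi₂)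
    (fun c d hdep => indep_aux (fun u hu => f1_neg ha hb hu) hi₁ hi₂ c d hdep)
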